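/- arXiv:1312.6412 — 4 statements merged into one kernel-verified Lean document; each statement's English description precedes it below -/
import Mathlib

section
/- Let {α, β} = {α₁, α₂} (so α+β = α₁+α₂). For all natural numbers r and K and all integers m₁, …, m_r, there exist complex constants C_{j₁,…,j_p} (indexed by 0 ≤ p ≤ K and 1 ≤ j₁ < ⋯ < j_p ≤ r; the inner sum is empty when p > r) such that in U(𝔫̄): x_β(m₁)⋯x_β(m_r)·x_α(−1)^K = Σ_{p=0}^{K} x_α(−1)^{K−p} · Σ_{1≤j₁<⋯<j_p≤r} C_{j₁,…,j_p} · y₁⋯y_r, where y_l = x_{α₁+α₂}(m_l − 1) if l ∈ {j₁,…,j_p} and y_l = x_β(m_l) otherwise. -/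
/- Setup: the nilpotent subalgebra 𝔫 ⊂ 𝔰𝔩(3,ℂ) spanned by E₁₂, E₂₃, E₁₃, its loop
algebra 𝔫̄ = 𝔫 ⊗ ℂ[t,t⁻¹], and the universal enveloping algebra U(𝔫̄). -/

noncomputable section
open scoped TensorProduct

namespace PrincipalSubspaceSL3

attribute [local instance 100] LieRing.ofAssociativeRing

/-- 3×3 complex matrices. -/
abbrev gl3 : Type := Matrix (Fin 3) (Fin 3) ℂ

/-- The root vectors: `Egen 0 = x_{α₁} = E₁₂`, `Egen 1 = x_{α₂} = E₂₃`,
`Egen 2 = x_{α₁+α₂} = E₁₃`. -/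
def Egen : Fin 3 → gl3
  | 0 => Matrix.single 0 1 1
  | 1 => Matrix.single 1 2 1
  | 2 => Matrix.single 0 2 1

lemma egen_lie_mem :
    ∀ x ∈ Submodule.span ℂ (Set.range Egen), ∀ y ∈ Submodule.span ℂ (Set.range Egen),
      ⁅x, y⁆ ∈ Submodule.span ℂ (Set.range Egen) := by
  have key : ∀ a b : Fin 3, ⁅Egen a, Egen b⁆ ∈ Submodule.span ℂ (Set.range Egen) := by
    intro a b
    fin_cases a <;> fin_cases b <;>
      simp only [Egen, Ring.lie_def, Matrix.single_mul_single_same,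
        Matrix.single_mul_single_of_ne, Fin.reduceEq, ne_eq, not_false_eq_true,
        one_mul, sub_zero, zero_sub, sub_self] <;>
      first
        | exact Submodule.zero_mem _
        | exact Submodule.subset_span ⟨2, rfl⟩
        | exact Submodule.neg_mem _ (Submodule.subset_span ⟨2, rfl⟩)
  intro x hx
  induction hx using Submodule.span_induction with
  | mem x hxs =>
      obtain ⟨a, rfl⟩ := hxs
      intro y hy
      induction hy using Submodule.span_induction with
      | mem y hys => obtain ⟨b, rfl⟩ := hys; exact key a b
      | zero => simp
      | add y z hy hz hy' hz' => rw [lie_add]; exact Submodule.add_mem _ hy' hz'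
      | smul c y hy hy' => rw [lie_smul]; exact Submodule.smul_mem _ _ hy'
  | zero => intro y hy; simp
  | add x z hx hz hx' hz' =>
      intro y hy; rw [add_lie]; exact Submodule.add_mem _ (hx' y hy) (hz' y hy)
  | smul c x hx hx' =>
      intro y hy; rw [smul_lie]; exact Submodule.smul_mem _ _ (hx' y hy)

/-- The nilpotent Lie subalgebra 𝔫 = ℂE₁₂ ⊕ ℂE₂₃ ⊕ ℂE₁₃ of 𝔰𝔩(3,ℂ). -/
def nn : LieSubalgebra ℂ gl3 :=
  { Submodule.span ℂ (Set.range Egen) with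
    lie_mem' := fun {x y} hx hy => egen_lie_mem x hx y hy }

/-- Laurent polynomials ℂ[t, t⁻¹]. -/
abbrev A : Type := LaurentPolynomial ℂ

/-- The loop algebra 𝔫̄ = 𝔫 ⊗ ℂ[t,t⁻¹]. -/
abbrev nbar : Type := A ⊗[ℂ] nn

set_option synthInstance.maxHeartbeats 1000000 in
instance : LieAlgebra ℂ nbar where
  lie_smul c x y := by
    have h := lie_smul (algebraMap ℂ A c) x y
    rwa [algebraMap_smul, algebraMap_smul] at h

/-- The root vectors as elements of 𝔫. -/
def en (i : Fin 3) : nn := ⟨Egen i, Submodule.subset_span ⟨i, rfl⟩⟩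

/-- `nx i m` is the element x_{α}(m) = x_α ⊗ tᵐ of 𝔫̄, where α is α₁, α₂, α₁+α₂
according to i = 0, 1, 2. -/
def nx (i : Fin 3) (m : ℤ) : nbar := LaurentPolynomial.T m ⊗ₜ[ℂ] en i

/-- The universal enveloping algebra U(𝔫̄). -/
abbrev U : Type := UniversalEnvelopingAlgebra ℂ nbar

/-- `xg i m` is the element x_α(m) regarded inside U(𝔫̄). -/
def xg (i : Fin 3) (m : ℤ) : U := UniversalEnvelopingAlgebra.ι ℂ (nx i m)

/-- `Rtr k i t` = R^i_{-1,t} : the sum of x_{α_i}(m₁)⋯x_{α_i}(m_{k+1}) over all integer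
tuples with every m_j ≤ -1 and m₁+⋯+m_{k+1} = -t (parametrized by m_j = -1 - n_j with
n : Fin (k+1) → ℕ, ∑ n = t - (k+1)).  Here i : Fin 2 refers to the simple root α_{i+1}. -/
def Rtr (k : ℕ) (i : Fin 2) (t : ℤ) : U :=
  ∑ f ∈ Finset.Nat.antidiagonalTuple (k + 1) (t - (k + 1)).toNat,
    (List.ofFn fun j : Fin (k + 1) => xg i.castSucc (-1 - (f j : ℤ))).prod

/-- The left ideal J = Σ_{i,t≥k+1} U(𝔫̄)·R^i_{-1,t}. -/
def Jid (k : ℕ) : Submodule U U :=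
  Submodule.span U {u : U | ∃ i : Fin 2, ∃ t : ℤ, (k : ℤ) + 1 ≤ t ∧ u = Rtr k i t}

/-- The left ideal U(𝔫̄)·𝔫̄₊, generated by the x_α(m) with m ≥ 0. -/
def nplusIdeal : Submodule U U :=
  Submodule.span U {u : U | ∃ i : Fin 3, ∃ m : ℤ, 0 ≤ m ∧ u = xg i m}

/-- The left ideal I_{kΛ₀} = J + U(𝔫̄)·𝔫̄₊. -/
def IkL0 (k : ℕ) : Submodule U U := Jid k ⊔ nplusIdeal

/-- The left ideal I_{k₀Λ₀+k₁Λ₁+k₂Λ₂} = I_{kΛ₀} + U·x_{α₁}(-1)^{k₀+k₂+1}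
+ U·x_{α₂}(-1)^{k₀+k₁+1} + U·x_{α₁+α₂}(-1)^{k₀+1} (with k = k₀+k₁+k₂). -/
def Iwt (k k0 k1 k2 : ℕ) : Submodule U U :=
  IkL0 k ⊔ Submodule.span U {xg 0 (-1) ^ (k0 + k2 + 1)}
    ⊔ Submodule.span U {xg 1 (-1) ^ (k0 + k1 + 1)}
    ⊔ Submodule.span U {xg 2 (-1) ^ (k0 + 1)}


/-! Write `a = x_α(-1)`, `b = x_β(m)`, `z = x_{α₁+α₂}(m-1)`. In `U(𝔫̄)` one has `b a = a b ± z`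
with `z` commuting with `a` (it is central in `𝔫̄`), hence `b aⁿ = aⁿ b ± n aⁿ⁻¹ z`. Moving `b` past
`a^(K - |s|)` thus either keeps the factor `b` or replaces it by `z` while lowering the exponent by
one, so by induction on `r` the product `x_β(m₁)⋯x_β(m_r) a^K` lies in the span of the elements
`a^(K - |s|) y₁⋯y_r` with `|s| ≤ K`. -/

theorem mul_pow_eq_pow_mul_add {A : Type*} [Semiring A] {a b c : A}
    (hba : b * a = a * b + c) (hac : Commute a c) (n : ℕ) :
    b * a ^ n = a ^ n * b + n • (a ^ (n - 1) * c) := by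
  induction n with
  | zero => simp
  | succ n ih =>
    calc b * a ^ (n + 1) = a * (b * a ^ n) + c * a ^ n := by
          rw [pow_succ', ← mul_assoc, hba, add_mul, mul_assoc]
      _ = a ^ (n + 1) * b + (n + 1) • (a ^ n * c) := by
          rw [ih, ← (hac.pow_left n).eq, mul_add, ← mul_assoc, ← pow_succ', mul_smul_comm,
            add_smul, one_smul, add_assoc]
          rcases n with _ | n
          · simp
          · rw [Nat.add_sub_cancel, ← mul_assoc, ← pow_succ']

section SubstProd

variable {A : Type*} [Semiring A] {r : ℕ}

def substProd (b z : Fin r → A) (s : Finset (Fin r)) : A :=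
  (List.ofFn fun l => if l ∈ s then z l else b l).prod

theorem substProd_map_succ (b z : Fin (r + 1) → A) (s : Finset (Fin r)) :
    substProd b z (s.map (Fin.succEmb r)) = b 0 * substProd (Fin.tail b) (Fin.tail z) s := by
  simp [substProd, List.ofFn_succ, Fin.tail]

theorem substProd_insert_zero_map_succ (b z : Fin (r + 1) → A) (s : Finset (Fin r)) :
    substProd b z (insert 0 (s.map (Fin.succEmb r))) =
      z 0 * substProd (Fin.tail b) (Fin.tail z) s := by
  simp [substProd, List.ofFn_succ, Fin.succ_ne_zero, Fin.tail]

end SubstProd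

section Straightening

variable {R A ι : Type*} [CommSemiring R] [Semiring A] [Algebra R A] [Fintype ι]

variable (R) in
def powMulSpan (a : A) (g : Finset ι → A) (K : ℕ) : Submodule R A :=
  Submodule.span R ((fun s => a ^ (K - s.card) * g s) '' ↑(Finset.univ.filter fun s : Finset ι => s.card ≤ K))

theorem pow_mul_mem_powMulSpan {a : A} {g : Finset ι → A} {K : ℕ} {s : Finset ι}
    (hs : s.card ≤ K) : a ^ (K - s.card) * g s ∈ powMulSpan R a g K :=
  Submodule.subset_span ⟨s, by simpa using hs, rfl⟩

theorem exists_eq_sum_pow_mul_sum_of_mem_powMulSpan {a x : A} {g : Finset ι → A} {K : ℕ}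
    (hx : x ∈ powMulSpan R a g K) :
    ∃ C : Finset ι → R, x = ∑ p ∈ Finset.range (K + 1),
      a ^ (K - p) * ∑ s ∈ Finset.univ.filter (fun s : Finset ι => s.card = p), C s • g s := by
  obtain ⟨C, rfl⟩ := (Submodule.mem_span_image_finset_iff_exists_fun' R).mp hx
  refine ⟨C, ?_⟩
  rw [← Finset.sum_fiberwise_of_maps_to (g := Finset.card) (t := Finset.range (K + 1))
    (fun s hs => by simpa [Nat.lt_succ_iff] using hs)]
  refine Finset.sum_congr rfl fun p hp => ?_
  rw [Finset.mul_sum, Finset.filter_filter]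
  refine Finset.sum_congr ?_ fun s hs => ?_
  · ext s
    simp only [Finset.mem_filter, Finset.mem_univ, true_and, and_iff_right_iff_imp]
    rintro rfl
    exact Nat.lt_succ_iff.mp (Finset.mem_range.mp hp)
  · rw [(Finset.mem_filter.mp hs).2, mul_smul_comm]

variable {r : ℕ}

theorem mul_pow_mul_substProd_mem_powMulSpan {a : A} {b z : Fin (r + 1) → A} {ε : R}
    (hba : b 0 * a = a * b 0 + ε • z 0) (hz : Commute a (z 0)) {K : ℕ} {s : Finset (Fin r)}
    (hs : s.card ≤ K) :
    b 0 * (a ^ (K - s.card) * substProd (Fin.tail b) (Fin.tail z) s) ∈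
      powMulSpan R a (substProd b z) K := by
  rw [← mul_assoc, mul_pow_eq_pow_mul_add hba (hz.smul_right ε), add_mul, mul_assoc,
    ← substProd_map_succ, smul_mul_assoc, mul_smul_comm, smul_mul_assoc, mul_assoc,
    ← substProd_insert_zero_map_succ]
  refine add_mem ?_ ?_
  · have h := pow_mul_mem_powMulSpan (R := R) (a := a) (g := substProd b z) (K := K)
      (s := s.map (Fin.succEmb r)) (by rwa [Finset.card_map])
    rwa [Finset.card_map] at h
  · rcases hs.lt_or_eq with hlt | heq
    · have hcard : (insert 0 (s.map (Fin.succEmb r))).card = s.card + 1 := by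
        rw [Finset.card_insert_of_notMem (by simp [Fin.succ_ne_zero]), Finset.card_map]
      refine nsmul_mem (Submodule.smul_mem _ _ ?_) _
      convert pow_mul_mem_powMulSpan (R := R) (a := a) (g := substProd b z)
        (hcard.trans_le hlt) using 3
      rw [hcard]
      omega
    · simp [heq]

theorem prod_mul_pow_mem_powMulSpan (a : A) (b z : Fin r → A) (ε : Fin r → R)
    (hba : ∀ l, b l * a = a * b l + ε l • z l) (hz : ∀ l, Commute a (z l)) (K : ℕ) :
    (List.ofFn b).prod * a ^ K ∈ powMulSpan R a (substProd b z) K := by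
  induction r with
  | zero =>
    convert pow_mul_mem_powMulSpan (R := R) (a := a) (g := substProd b z) (s := ∅)
      (Nat.zero_le K) using 1
    simp [substProd]
  | succ r ih =>
    have htail := ih (Fin.tail b) (Fin.tail z) (Fin.tail ε) (fun l => hba l.succ)
      (fun l => hz l.succ)
    have hmul : (powMulSpan R a (substProd (Fin.tail b) (Fin.tail z)) K).map
        (LinearMap.mulLeft R (b 0)) ≤ powMulSpan R a (substProd b z) K := by
      rw [powMulSpan, Submodule.map_span_le]
      rintro _ ⟨s, hs, rfl⟩
      exact mul_pow_mul_substProd_mem_powMulSpan (hba 0) (hz 0) (by simpa using hs)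
    rw [List.ofFn_succ, List.prod_cons, mul_assoc]
    exact hmul (Submodule.mem_map_of_mem htail)

end Straightening

theorem ι_mul_ι_eq_add_lie {R L : Type*} [CommRing R] [LieRing L] [LieAlgebra R L] (x y : L) :
    UniversalEnvelopingAlgebra.ι R x * UniversalEnvelopingAlgebra.ι R y =
      UniversalEnvelopingAlgebra.ι R y * UniversalEnvelopingAlgebra.ι R x +
        UniversalEnvelopingAlgebra.ι R ⁅x, y⁆ := by
  rw [LieHom.map_lie, Ring.lie_def]
  abel

theorem en_lie_two (a : Fin 3) : ⁅en a, en 2⁆ = 0 := by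
  apply Subtype.ext
  show ⁅Egen a, Egen 2⁆ = 0
  fin_cases a <;> simp [Egen, Ring.lie_def]

theorem en_zero_lie_one : ⁅en 0, en 1⁆ = en 2 := by
  apply Subtype.ext
  show ⁅Egen 0, Egen 1⁆ = Egen 2
  simp [Egen, Ring.lie_def]

theorem nx_lie_nx (a b : Fin 3) (m n : ℤ) :
    ⁅nx a m, nx b n⁆ = LaurentPolynomial.T (m + n) ⊗ₜ ⁅en a, en b⁆ := by
  rw [nx, nx, LieAlgebra.ExtendScalars.bracket_tmul, ← LaurentPolynomial.T_add]

theorem commute_xg_two (a : Fin 3) (m n : ℤ) : Commute (xg a m) (xg 2 n) := by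
  rw [Commute, SemiconjBy, xg, xg, ι_mul_ι_eq_add_lie, nx_lie_nx, en_lie_two, TensorProduct.tmul_zero,
    map_zero, add_zero]

theorem exists_xg_mul_xg_neg_one {i j : Fin 2} (hij : i ≠ j) (m : ℤ) :
    ∃ ε : ℂ, xg j.castSucc m * xg i.castSucc (-1) =
      xg i.castSucc (-1) * xg j.castSucc m + ε • xg 2 (m - 1) := by
  obtain ⟨ε, hε⟩ : ∃ ε : ℂ, ⁅nx j.castSucc m, nx i.castSucc (-1)⁆ = ε • nx 2 (m - 1) := by
    fin_cases i <;> fin_cases j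
    · exact absurd rfl hij
    · refine ⟨-1, ?_⟩
      change ⁅nx 1 m, nx 0 (-1)⁆ = _
      rw [nx_lie_nx, ← sub_eq_add_neg, ← lie_skew, en_zero_lie_one, TensorProduct.tmul_neg, nx]
      exact (neg_one_smul ℂ _).symm
    · refine ⟨1, ?_⟩
      change ⁅nx 0 m, nx 1 (-1)⁆ = _
      rw [nx_lie_nx, ← sub_eq_add_neg, en_zero_lie_one, one_smul, nx]
    · exact absurd rfl hij
  exact ⟨ε, by rw [xg, xg, ι_mul_ι_eq_add_lie, hε, map_smul, xg]⟩

/-- Lemma 3.3 (rootcommute).  With {α, β} = {α₁, α₂} (indices i ≠ j in Fin 2,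
so α+β = α₁+α₂ has index 2), for all r, K ∈ ℕ and integers m₁, …, m_r there are complex
constants C (indexed by the subsets {j₁ < ⋯ < j_p} of {1,…,r}, with 0 ≤ p ≤ K) such that
x_β(m₁)⋯x_β(m_r)·x_α(−1)^K = Σ_{p=0}^{K} x_α(−1)^{K−p} Σ_{j₁<⋯<j_p} C_{j₁…j_p} y₁⋯y_r,
where y_l = x_{α₁+α₂}(m_l − 1) if l ∈ {j₁,…,j_p} and y_l = x_β(m_l) otherwise. -/
theorem statement0 (i j : Fin 2) (hij : i ≠ j) (r K : ℕ) (m : Fin r → ℤ) :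
    ∃ C : Finset (Fin r) → ℂ,
      (List.ofFn fun l : Fin r => xg j.castSucc (m l)).prod * xg i.castSucc (-1) ^ K
        = ∑ p ∈ Finset.range (K + 1),
            xg i.castSucc (-1) ^ (K - p) *
              ∑ s ∈ Finset.univ.filter fun s : Finset (Fin r) => s.card = p,
                C s • (List.ofFn fun l : Fin r =>
                  if l ∈ s then xg 2 (m l - 1) else xg j.castSucc (m l)).prod := by
  choose ε hε using fun l => exists_xg_mul_xg_neg_one hij (m l)
  exact exists_eq_sum_pow_mul_sum_of_mem_powMulSpan
    (prod_mul_pow_mem_powMulSpan _ _ _ ε hε (fun l => commute_xg_two _ _ _) K)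

end PrincipalSubspaceSL3
end
end

section
/- For all i, j ∈ {1,2} with i ≠ j, every integer t ≥ k+1, and every natural number m with 0 ≤ m ≤ k, one has R^i_{−1,t} · x_{α_j}(−1)^m ∈ I_{kΛ₀} + U(𝔫̄)·x_{α₁+α₂}(−1). -/
/- Setup: the nilpotent subalgebra 𝔫 ⊂ 𝔰𝔩(3,ℂ) spanned by E₁₂, E₂₃, E₁₃, its loop
algebra 𝔫̄ = 𝔫 ⊗ ℂ[t,t⁻¹], and the universal enveloping algebra U(𝔫̄). -/

noncomputable section
open scoped TensorProduct

namespace PrincipalSubspaceSL3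

attribute [local instance 100] LieRing.ofAssociativeRing

/-! Write `e = x_{α_i}`, `f = x_{α_j}`, `z = x_{α₁+α₂}`, so that `[e(a), f(b)] = c z(a + b)`
with `z` central, and let `R^{(p)}_n` be the sum of `e(m₁)⋯e(m_p)` over `m_j ≤ -1` with
`m₁ + ⋯ + m_p = -(p + n)`. Then `[R^{(k+1)}_n, f(b)] = (k+1)c Σ_{a+r=n} z(b-1-a) R^{(k)}_r`, and
the commutator with `f(0)` at `n + 1` is the one with `f(-1)` at `n` plus the single term
`(k+1)c z(-1) R^{(k)}_{n+1}`. So, by induction on `m`, `R^{(k+1)}_n f(-1)^{m+1}` is, modulo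
`U z(-1)` and terms covered by the induction hypothesis, `R^{(k+1)}_{n+1} f(-1)^m f(0)`, which lies
in `U 𝔫̄₊` because `f(0)` commutes with `f(-1)`. -/

open Finset

theorem _root_.Finset.Nat.sum_antidiagonal_antidiagonal_comm {M : Type*} [AddCommMonoid M] (n : ℕ)
    (F : ℕ → ℕ → ℕ → M) :
    ∑ x ∈ antidiagonal n, ∑ y ∈ antidiagonal x.2, F x.1 y.1 y.2 =
      ∑ x ∈ antidiagonal n, ∑ y ∈ antidiagonal x.2, F y.1 x.1 y.2 := by
  rw [sum_sigma', sum_sigma']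
  refine sum_nbij' (fun x => ⟨(x.2.1, x.1.1 + x.2.2), (x.1.1, x.2.2)⟩)
    (fun x => ⟨(x.2.1, x.1.1 + x.2.2), (x.1.1, x.2.2)⟩) ?_ ?_ ?_ ?_ ?_ <;>
    rintro ⟨⟨a, b⟩, c, d⟩ h <;> simp_all <;> omega

theorem _root_.Finset.Nat.sum_antidiagonalTuple_succ {M : Type*} [AddCommMonoid M] (p n : ℕ)
    (G : (Fin (p + 1) → ℕ) → M) :
    ∑ g ∈ Nat.antidiagonalTuple (p + 1) n, G g =
      ∑ x ∈ antidiagonal n, ∑ g ∈ Nat.antidiagonalTuple p x.2, G (Fin.cons x.1 g) := by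
  have hval : (antidiagonal n).val = (List.Nat.antidiagonal n : Multiset (ℕ × ℕ)) := rfl
  simp only [Finset.sum, Nat.antidiagonalTuple, Multiset.Nat.antidiagonalTuple, hval,
    List.Nat.antidiagonalTuple, Multiset.map_coe, Multiset.sum_coe, List.flatMap_def,
    List.map_flatten, List.sum_flatten, List.map_map, Function.comp_def]

theorem _root_.UniversalEnvelopingAlgebra.commute_of_forall_commute_ι {R L : Type*} [CommRing R]
    [LieRing L] [LieAlgebra R L] {x : UniversalEnvelopingAlgebra R L}
    (hx : ∀ v, Commute x (UniversalEnvelopingAlgebra.ι R v)) (u : UniversalEnvelopingAlgebra R L) :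
    Commute x u := by
  have hsurj : Function.Surjective (UniversalEnvelopingAlgebra.mkAlgHom R L) :=
    RingCon.mkₐ_surjective _
  obtain ⟨u, rfl⟩ := hsurj u
  induction u using TensorAlgebra.induction with
  | algebraMap r => rw [AlgHom.commutes]; exact (Algebra.commutes r x).symm
  | ι v => exact hx v
  | mul a b ha hb => rw [map_mul]; exact ha.mul_right hb
  | add a b ha hb => rw [map_add]; exact ha.add_right hb

section ModeSum

variable {R : Type*} [Ring R]

/-- `R^{(p)}_n` of the proof sketch, with modes `m_j = -1 - g j`. -/
def modeSum (e : ℤ → R) (p n : ℕ) : R :=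
  ∑ g ∈ Nat.antidiagonalTuple p n, (List.ofFn fun j => e (-1 - g j)).prod

theorem modeSum_zero_commute (e : ℤ → R) (n : ℕ) (u : R) : Commute (modeSum e 0 n) u := by
  simp only [modeSum, List.ofFn_zero, List.prod_nil, sum_const, nsmul_one]
  exact Nat.cast_commute _ u

theorem modeSum_succ (e : ℤ → R) (p n : ℕ) :
    modeSum e (p + 1) n = ∑ x ∈ antidiagonal n, e (-1 - x.1) * modeSum e p x.2 := by
  simp only [modeSum, Nat.sum_antidiagonalTuple_succ, List.ofFn_succ, List.prod_cons,
    Fin.cons_zero, Fin.cons_succ, mul_sum]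

variable {e f z : ℤ → R}

theorem modeSum_succ_mul_of_mul (hef : ∀ a b, e a * f b = f b * e a + z (a + b))
    {b : ℤ} {p : ℕ} {W : ℕ → R} (hW : ∀ r, modeSum e p r * f b = f b * modeSum e p r + W r)
    (n : ℕ) :
    modeSum e (p + 1) n * f b = f b * modeSum e (p + 1) n +
      ∑ x ∈ antidiagonal n, z (b - 1 - x.1) * modeSum e p x.2 +
        ∑ x ∈ antidiagonal n, e (-1 - x.1) * W x.2 := by
  simp only [modeSum_succ, sum_mul, mul_sum, ← sum_add_distrib]
  refine sum_congr rfl fun x _ => ?_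
  rw [mul_assoc, hW, mul_add, ← mul_assoc, hef, add_mul, mul_assoc,
    show -1 - (x.1 : ℤ) + b = b - 1 - x.1 by ring, add_assoc]

theorem sum_mul_sum_modeSum (hze : ∀ a b, Commute (z a) (e b)) (b : ℤ) (p n : ℕ) :
    ∑ x ∈ antidiagonal n, e (-1 - x.1) *
        ∑ y ∈ antidiagonal x.2, z (b - 1 - y.1) * modeSum e p y.2 =
      ∑ x ∈ antidiagonal n, z (b - 1 - x.1) * modeSum e (p + 1) x.2 := by
  simp only [mul_sum, modeSum_succ, ← mul_assoc, (hze _ _).symm.eq]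
  exact Nat.sum_antidiagonal_antidiagonal_comm n fun a c r =>
    z (b - 1 - c) * e (-1 - a) * modeSum e p r

theorem modeSum_succ_mul (hef : ∀ a b, e a * f b = f b * e a + z (a + b))
    (hze : ∀ a b, Commute (z a) (e b)) (b : ℤ) (p n : ℕ) :
    modeSum e (p + 1) n * f b = f b * modeSum e (p + 1) n +
      (p + 1) • ∑ x ∈ antidiagonal n, z (b - 1 - x.1) * modeSum e p x.2 := by
  induction p generalizing n with
  | zero =>
    simpa using modeSum_succ_mul_of_mul hef (W := 0)
      (fun r => by rw [(modeSum_zero_commute e r (f b)).eq, Pi.zero_apply, add_zero]) n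
  | succ p ih =>
    rw [modeSum_succ_mul_of_mul hef ih n]
    simp only [mul_smul_comm, ← smul_sum, sum_mul_sum_modeSum hze]
    rw [add_assoc, ← succ_nsmul']

theorem modeSum_mul_pow_mem (M : Submodule R R) (hef : ∀ a b, e a * f b = f b * e a + z (a + b))
    (hz : ∀ a u, Commute (z a) u) (hff : Commute (f 0) (f (-1))) {p : ℕ}
    (hQ : ∀ n, modeSum e (p + 1) n ∈ M) (hf : f 0 ∈ M) (hz₁ : z (-1) ∈ M) (m n : ℕ) :
    modeSum e (p + 1) n * f (-1) ^ m ∈ M := by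
  induction m generalizing n with
  | zero => simpa using hQ n
  | succ m ih =>
    have hze : ∀ a b, Commute (z a) (e b) := fun a b => hz a (e b)
    have htail : ((p + 1) • ∑ x ∈ antidiagonal n, z (-1 - 1 - x.1) * modeSum e p x.2 : R) =
        modeSum e (p + 1) (n + 1) * f 0 - f 0 * modeSum e (p + 1) (n + 1) -
          (p + 1) • (z (-1) * modeSum e p (n + 1)) := by
      rw [modeSum_succ_mul hef hze 0, Nat.sum_antidiagonal_succ]
      simp only [smul_add, add_sub_cancel_left, Nat.cast_zero, Nat.cast_add, Nat.cast_one]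
      rw [show (0 : ℤ) - 1 - 0 = -1 by ring, add_sub_cancel_left]
      congr 1
      refine Finset.sum_congr rfl fun x _ => ?_
      rw [show (0 : ℤ) - 1 - (x.1 + 1) = -1 - 1 - x.1 by ring]
    have hstep : modeSum e (p + 1) n * f (-1) ^ (m + 1) =
        f (-1) * (modeSum e (p + 1) n * f (-1) ^ m) +
          modeSum e (p + 1) (n + 1) * f (-1) ^ m * f 0 -
          f 0 * (modeSum e (p + 1) (n + 1) * f (-1) ^ m) -
          (p + 1) • (modeSum e p (n + 1) * f (-1) ^ m * z (-1)) := by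
      rw [pow_succ', ← mul_assoc, modeSum_succ_mul hef hze, htail]
      simp only [add_mul, sub_mul, smul_mul_assoc, mul_assoc, (hff.pow_right m).eq,
        (hz (-1) (modeSum e p (n + 1) * f (-1) ^ m)).eq]
      abel
    rw [hstep]
    exact sub_mem (sub_mem (add_mem (M.smul_mem _ (ih n)) (M.smul_mem _ hf))
      (M.smul_mem _ (ih (n + 1)))) (nsmul_mem (M.smul_mem _ hz₁) _)

end ModeSum

theorem lie_Egen_two_eq_zero {x : gl3} (hx : x ∈ Submodule.span ℂ (Set.range Egen)) :
    ⁅Egen 2, x⁆ = 0 := by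
  induction hx using Submodule.span_induction with
  | mem x hx =>
    obtain ⟨b, rfl⟩ := hx
    fin_cases b <;> simp [Egen, Ring.lie_def, Matrix.single_mul_single_of_ne]
  | zero => exact lie_zero _
  | add x y _ _ hx hy => rw [lie_add, hx, hy, add_zero]
  | smul c x _ hx => rw [lie_smul, hx, smul_zero]

theorem lie_nx_two_eq_zero (a : ℤ) (w : nbar) : ⁅nx 2 a, w⁆ = 0 := by
  induction w using TensorProduct.induction_on with
  | zero => exact lie_zero (M := nbar) (nx 2 a)
  | tmul s v =>
    rw [nx, LieAlgebra.ExtendScalars.bracket_tmul,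
      show ⁅en 2, v⁆ = 0 from Subtype.ext (lie_Egen_two_eq_zero v.2), TensorProduct.tmul_zero]
  | add w w' hw hw' => exact (lie_add (nx 2 a) w w').trans (by rw [hw, hw', add_zero])

theorem xg_two_commute (a : ℤ) (u : U) : Commute (xg 2 a) u := by
  refine UniversalEnvelopingAlgebra.commute_of_forall_commute_ι (fun v => ?_) u
  have h := (UniversalEnvelopingAlgebra.ι ℂ).map_lie (nx 2 a) v
  rwa [lie_nx_two_eq_zero, map_zero, Ring.lie_def, eq_comm, sub_eq_zero] at h

theorem xg_mul_xg (a b : Fin 3) (m p : ℤ) :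
    xg a m * xg b p = xg b p * xg a m +
      UniversalEnvelopingAlgebra.ι ℂ (LaurentPolynomial.T (m + p) ⊗ₜ[ℂ] ⁅en a, en b⁆ : nbar) := by
  rw [← sub_eq_iff_eq_add', LaurentPolynomial.T_add, ← LieAlgebra.ExtendScalars.bracket_tmul,
    LieHom.map_lie, Ring.lie_def]
  rfl

theorem xg_commute_self (a : Fin 3) (m p : ℤ) : Commute (xg a m) (xg a p) := by
  rw [Commute, SemiconjBy, xg_mul_xg, lie_self, TensorProduct.tmul_zero, map_zero, add_zero]

theorem lie_en_castSucc_of_ne {i j : Fin 2} (hij : i ≠ j) :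
    ∃ c : ℂ, ⁅en i.castSucc, en j.castSucc⁆ = c • en 2 := by
  fin_cases i <;> fin_cases j
  · exact absurd rfl hij
  · exact ⟨1, Subtype.ext (by simp [en, Egen, Ring.lie_def, Matrix.single_mul_single_of_ne])⟩
  · exact ⟨-1, Subtype.ext (by simp [en, Egen, Ring.lie_def, Matrix.single_mul_single_of_ne])⟩
  · exact absurd rfl hij

theorem xg_mul_xg_of_ne {i j : Fin 2} (hij : i ≠ j) : ∃ c : ℂ, ∀ a b,
    xg i.castSucc a * xg j.castSucc b = xg j.castSucc b * xg i.castSucc a + c • xg 2 (a + b) := by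
  obtain ⟨c, hc⟩ := lie_en_castSucc_of_ne hij
  exact ⟨c, fun a b => by rw [xg_mul_xg, hc, TensorProduct.tmul_smul, map_smul]; rfl⟩

theorem Rtr_eq_modeSum (k : ℕ) (i : Fin 2) (t : ℤ) :
    Rtr k i t = modeSum (xg i.castSucc) (k + 1) (t - (k + 1)).toNat := rfl

theorem modeSum_mem_Jid (k : ℕ) (i : Fin 2) (n : ℕ) : modeSum (xg i.castSucc) (k + 1) n ∈ Jid k :=
  Submodule.subset_span ⟨i, n + k + 1, by omega, by rw [Rtr_eq_modeSum]; congr; omega⟩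

theorem xg_mem_nplusIdeal (a : Fin 3) {m : ℤ} (hm : 0 ≤ m) : xg a m ∈ nplusIdeal :=
  Submodule.subset_span ⟨a, m, hm, rfl⟩

theorem statement1_general (k : ℕ) (i j : Fin 2) (hij : i ≠ j)
    (t : ℤ) (m : ℕ) :
    Rtr k i t * xg j.castSucc (-1) ^ m ∈
      IkL0 k ⊔ Submodule.span U {xg 2 (-1)} := by
  obtain ⟨c, hc⟩ := xg_mul_xg_of_ne hij
  have hR n : modeSum (xg i.castSucc) (k + 1) n ∈ IkL0 k ⊔ Submodule.span U {xg 2 (-1)} :=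
    Submodule.mem_sup_left (Submodule.mem_sup_left (modeSum_mem_Jid k i n))
  have hf : xg j.castSucc 0 ∈ IkL0 k ⊔ Submodule.span U {xg 2 (-1)} :=
    Submodule.mem_sup_left (Submodule.mem_sup_right (xg_mem_nplusIdeal _ le_rfl))
  have hz : c • xg 2 (-1) ∈ IkL0 k ⊔ Submodule.span U {xg 2 (-1)} :=
    Submodule.smul_of_tower_mem _ c
      (Submodule.mem_sup_right (Submodule.mem_span_singleton_self _))
  rw [Rtr_eq_modeSum]
  exact modeSum_mul_pow_mem _ hc (fun a u => (xg_two_commute a u).smul_left c)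
    (xg_commute_self _ 0 (-1)) hR hf hz m _

/-- for i ≠ j in {1,2}, t ≥ k+1 and 0 ≤ m ≤ k,
R^i_{−1,t}·x_{α_j}(−1)^m ∈ I_{kΛ₀} + U(𝔫̄)·x_{α₁+α₂}(−1). -/
theorem statement1 (k : ℕ) (hk : 0 < k) (i j : Fin 2) (hij : i ≠ j)
    (t : ℤ) (ht : (k : ℤ) + 1 ≤ t) (m : ℕ) (hm : m ≤ k) :
    Rtr k i t * xg j.castSucc (-1) ^ m ∈
      IkL0 k ⊔ Submodule.span U {xg 2 (-1)} :=
  statement1_general k i j hij t m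

end PrincipalSubspaceSL3
end
end

section
/- For every integer t ≥ k+1, the element R¹_{−1,t+k+1} − τ_{λ₁}(R¹_{−1,t}) lies in U(𝔫̄)·x_{α₁}(−1); that is, R¹_{−1,t+k+1} minus the sum of x_{α₁}(m₁−1)⋯x_{α₁}(m_{k+1}−1) over all integer tuples (m₁,…,m_{k+1}) with every m_j ≤ −1 and m₁+⋯+m_{k+1} = −t lies in the left ideal U(𝔫̄)·x_{α₁}(−1). -/
/- Setup: the nilpotent subalgebra 𝔫 ⊂ 𝔰𝔩(3,ℂ) spanned by E₁₂, E₂₃, E₁₃, its loop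
algebra 𝔫̄ = 𝔫 ⊗ ℂ[t,t⁻¹], and the universal enveloping algebra U(𝔫̄). -/

noncomputable section
open scoped TensorProduct

attribute [local instance 100] LieRing.ofAssociativeRing

namespace PrincipalSubspaceSL3

/-! The elements x_{α₁}(m) commute pairwise, so write g i = x_{α₁}(−1−i) and read a term of
R¹_{−1,t} as a product over a tuple of naturals summing to t − (k+1). The tuples of sum
t with all entries ≥ 1 are exactly the shifts by 1 of the tuples of sum t − (k+1), and the
shift is what τ_{λ₁} does to a term; every remaining tuple has an entry 0, so its product
contains the factor x_{α₁}(−1), which can be commuted to the right end. -/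

theorem _root_.List.prod_mem_span_singleton_of_commute {R : Type*} [Ring R] {a : R}
    {l : List R} (ha : a ∈ l) (hcomm : ∀ b ∈ l, Commute a b) :
    l.prod ∈ Submodule.span R {a} := by
  induction l with
  | nil => simp at ha
  | cons b l ih =>
    rw [List.prod_cons]
    obtain rfl | hl := List.mem_cons.mp ha
    · rw [(Commute.list_prod_right _ _ fun c hc => hcomm c (List.mem_cons_of_mem _ hc)).eq]
      exact Submodule.smul_mem _ _ (Submodule.mem_span_singleton_self _)
    · exact Submodule.smul_mem _ b (ih hl fun c hc => hcomm c (List.mem_cons_of_mem _ hc))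

open Finset Finset.Nat

theorem _root_.Finset.Nat.map_add_one_antidiagonalTuple (k n : ℕ) :
    (antidiagonalTuple k n).map ⟨(· + 1), add_left_injective 1⟩ =
      (antidiagonalTuple k (n + k)).filter fun f => ∀ j, 1 ≤ f j := by
  ext g
  simp only [mem_map, mem_filter, mem_antidiagonalTuple, Function.Embedding.coeFn_mk]
  constructor
  · rintro ⟨f, hf, rfl⟩
    refine ⟨?_, fun j => Nat.le_add_left 1 (f j)⟩
    simp [sum_add_distrib, hf]
  · rintro ⟨hg, hpos⟩
    have hg1 : ∀ j, g j - 1 + 1 = g j := fun j => Nat.sub_add_cancel (hpos j)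
    refine ⟨g - 1, ?_, funext hg1⟩
    have : ∑ j, (g j - 1 + 1) = ∑ j, g j := sum_congr rfl fun j _ => hg1 j
    simp only [sum_add_distrib, sum_const, card_univ, Fintype.card_fin, smul_eq_mul,
      mul_one] at this
    simp only [Pi.sub_apply, Pi.one_apply]
    omega

theorem _root_.Finset.Nat.sum_antidiagonalTuple_sub_sum_shift_mem_span {R : Type*} [Ring R]
    (g : ℕ → R) (hg : ∀ i, Commute (g 0) (g i)) (k n : ℕ) :
    ∑ f ∈ antidiagonalTuple k (n + k), (List.ofFn fun j => g (f j)).prod -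
        ∑ f ∈ antidiagonalTuple k n, (List.ofFn fun j => g (f j + 1)).prod ∈
      Submodule.span R {g 0} := by
  classical
  rw [← sum_filter_add_sum_filter_not _ fun f => ∀ j, 1 ≤ f j,
    ← map_add_one_antidiagonalTuple, sum_map]
  simp only [Function.Embedding.coeFn_mk, Pi.add_apply, Pi.one_apply, add_sub_cancel_left]
  refine Submodule.sum_mem _ fun f hf => ?_
  obtain ⟨j, hj⟩ := not_forall.mp (mem_filter.mp hf).2
  refine List.prod_mem_span_singleton_of_commute (List.mem_ofFn.mpr ⟨j, ?_⟩) ?_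
  · simp [Nat.lt_one_iff.mp (not_le.mp hj)]
  · simp only [List.mem_ofFn, forall_exists_index]
    rintro _ i rfl
    exact hg _

theorem commute_xg (i : Fin 3) (m p : ℤ) : Commute (xg i m) (xg i p) := by
  rw [commute_iff_lie_eq, xg, xg, ← LieHom.map_lie, nx, nx,
    LieAlgebra.ExtendScalars.bracket_tmul, lie_self, TensorProduct.tmul_zero, map_zero]

theorem map_Rtr_zero {F : Type*} [FunLike F U U] [RingHomClass F U U] (τ : F)
    (hτ : ∀ m, τ (xg 0 m) = xg 0 (m - 1)) (k : ℕ) (t : ℤ) :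
    τ (Rtr k 0 t) = ∑ f ∈ antidiagonalTuple (k + 1) (t - (k + 1)).toNat,
      (List.ofFn fun j : Fin (k + 1) => xg 0 (-1 - (f j : ℤ) - 1)).prod := by
  simp only [Rtr, map_sum, map_list_prod, List.map_ofFn, Function.comp_def, Fin.castSucc_zero,
    hτ]

theorem statement9_general (k : ℕ) (τ : U ≃ₐ[ℂ] U)
    (hτ1 : ∀ m : ℤ, τ (xg 0 m) = xg 0 (m - 1))
    (t : ℤ) (ht : (k : ℤ) + 1 ≤ t) :
    Rtr k 0 (t + ((k : ℤ) + 1)) - τ (Rtr k 0 t) ∈ Submodule.span U {xg 0 (-1)} ∧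
      Rtr k 0 (t + ((k : ℤ) + 1)) -
          (∑ f ∈ Finset.Nat.antidiagonalTuple (k + 1) (t - (k + 1)).toNat,
            (List.ofFn fun j : Fin (k + 1) => xg 0 (-1 - (f j : ℤ) - 1)).prod)
        ∈ Submodule.span U {xg 0 (-1)} := by
  obtain ⟨n, rfl⟩ : ∃ n : ℕ, t = n + (k + 1) := ⟨(t - (k + 1)).toNat, by omega⟩
  have hshift := sum_antidiagonalTuple_sub_sum_shift_mem_span (fun i : ℕ => xg 0 (-1 - i))
    (fun i => commute_xg 0 _ _) (k + 1) n
  have htop : (n + (k + 1) + (k + 1) - (k + 1) : ℤ).toNat = n + (k + 1) := by omega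
  have hbot : (n + (k + 1) - (k + 1) : ℤ).toNat = n := by omega
  rw [map_Rtr_zero τ hτ1, and_self, Rtr, htop, hbot]
  simpa only [Fin.castSucc_zero, Nat.cast_zero, sub_zero, Nat.cast_add, Nat.cast_one, ← sub_sub]
    using hshift

/-- for t ≥ k+1, R¹_{−1,t+k+1} − τ_{λ₁}(R¹_{−1,t}) ∈ U(𝔫̄)·x_{α₁}(−1);
that is, R¹_{−1,t+k+1} minus the sum of x_{α₁}(m₁−1)⋯x_{α₁}(m_{k+1}−1) over all integer
tuples with m_j ≤ −1, Σm_j = −t (here m_j = −1−f j), lies in U(𝔫̄)·x_{α₁}(−1). -/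
theorem statement9 (k : ℕ) (hk : 0 < k) (τ : U ≃ₐ[ℂ] U)
    (hτ1 : ∀ m : ℤ, τ (xg 0 m) = xg 0 (m - 1))
    (hτ2 : ∀ m : ℤ, τ (xg 1 m) = xg 1 m)
    (hτ3 : ∀ m : ℤ, τ (xg 2 m) = xg 2 (m - 1))
    (t : ℤ) (ht : (k : ℤ) + 1 ≤ t) :
    Rtr k 0 (t + ((k : ℤ) + 1)) - τ (Rtr k 0 t) ∈ Submodule.span U {xg 0 (-1)} ∧
      Rtr k 0 (t + ((k : ℤ) + 1)) -
          (∑ f ∈ Finset.Nat.antidiagonalTuple (k + 1) (t - (k + 1)).toNat,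
            (List.ofFn fun j : Fin (k + 1) => xg 0 (-1 - (f j : ℤ) - 1)).prod)
        ∈ Submodule.span U {xg 0 (-1)} :=
  statement9_general k τ hτ1 t ht

end PrincipalSubspaceSL3
end
end

section
/- For all nonnegative integers k₀, k₁, k₂ with k₀+k₁+k₂ = k: x_{α₁}(−2)^{k₀+k₂+1} · x_{α₁}(−1)^{k₁} · x_{α₁+α₂}(−1)^{k₂} ∈ I_{k₂Λ₀+k₀Λ₁+k₁Λ₂}. -/
/- Setup: the nilpotent subalgebra 𝔫 ⊂ 𝔰𝔩(3,ℂ) spanned by E₁₂, E₂₃, E₁₃, its loop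
algebra 𝔫̄ = 𝔫 ⊗ ℂ[t,t⁻¹], and the universal enveloping algebra U(𝔫̄). -/

noncomputable section
open scoped TensorProduct

namespace PrincipalSubspaceSL3

attribute [local instance 100] LieRing.ofAssociativeRing

/-!
Put `a = k₀ + k₂ + 1`, write `I = I_{k₂Λ₀+k₀Λ₁+k₁Λ₂}` and use the relation
`R¹_{-1,k+1+a} ∈ I`: it is a sum, over tuples `n : Fin (k+1) → ℕ` with `∑ n = a`, of products
of the pairwise commuting elements `x_{α₁}(-1-n_j)`. The tuples with entries in `{0, 1}` all contribute `x_{α₁}(-2)^a x_{α₁}(-1)^{k₁}`;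
every other tuple has at least `k₁ + 1` zero entries, so its term is a multiple of
`x_{α₁}(-1)^{k₁+1}`. After multiplying by `x_{α₁+α₂}(-1)^{k₂}` these multiples lie in `I`: for
`y = x_{α₂}(0) ∈ 𝔫̄₊`, the relation `[y, x_{α₁}(-1)] = -x_{α₁+α₂}(-1)` gives
`y^{k₂} x_{α₁}(-1)^{k₁+1+k₂} ≡ ± (k₁+1+k₂)!/(k₁+1)! · x_{α₁}(-1)^{k₁+1} x_{α₁+α₂}(-1)^{k₂}`
modulo `U·y`, and `x_{α₁}(-1)^{k₁+1+k₂}` is a generator of `I`. What is left is a positive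
multiple of the element in question.
-/

open Finset Finset.Nat

section CommutatorPowers

variable {R : Type*} [Ring R] {x y z : R}

theorem mul_pow_succ_of_mul_eq_sub (hyx : y * x = x * y - z) (hxz : Commute x z) (n : ℕ) :
    y * x ^ (n + 1) = x ^ (n + 1) * y - (n + 1) • (x ^ n * z) := by
  induction n with
  | zero => simpa using hyx
  | succ n ih =>
    calc y * x ^ (n + 1 + 1) = x * (y * x ^ (n + 1)) - z * x ^ (n + 1) := by
          rw [pow_succ' x (n + 1), ← mul_assoc, hyx, sub_mul, mul_assoc]
      _ = x ^ (n + 1 + 1) * y - (n + 1 + 1) • (x ^ (n + 1) * z) := by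
          rw [ih, (hxz.symm.pow_right (n + 1)).eq, mul_sub, mul_smul_comm, ← mul_assoc,
            ← mul_assoc, ← pow_succ', ← pow_succ', sub_sub, succ_nsmul _ (n + 1)]

theorem exists_pow_mul_pow_add_of_mul_eq_sub (hyx : y * x = x * y - z) (hxz : Commute x z)
    (hyz : Commute y z) (n b : ℕ) :
    ∃ u : R, y ^ b * x ^ (n + b)
      = ((-1) ^ b * (n + b).descFactorial b : ℤ) • (x ^ n * z ^ b) + u * y := by
  induction b with
  | zero => exact ⟨0, by simp⟩
  | succ b ih =>
    obtain ⟨u, hu⟩ := ih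
    refine ⟨y ^ b * x ^ (n + b + 1) - (n + b + 1) • (u * z), ?_⟩
    have hdesc : (n + (b + 1)).descFactorial (b + 1) = (n + b + 1) * (n + b).descFactorial b :=
      Nat.succ_descFactorial_succ (n + b) b
    calc y ^ (b + 1) * x ^ (n + (b + 1)) = y ^ b * (y * x ^ (n + b + 1)) := by
          rw [pow_succ, mul_assoc, ← add_assoc]
      _ = (y ^ b * x ^ (n + b + 1)) * y - (n + b + 1) • ((y ^ b * x ^ (n + b)) * z) := by
          rw [mul_pow_succ_of_mul_eq_sub hyx hxz, mul_sub, mul_smul_comm, ← mul_assoc,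
            ← mul_assoc]
      _ = _ := by
          rw [hu, add_mul, smul_mul_assoc, mul_assoc (x ^ n), ← pow_succ, mul_assoc u,
            hyz.eq, ← mul_assoc, hdesc, sub_mul, smul_mul_assoc]
          push_cast
          module

end CommutatorPowers

theorem Submodule.mem_of_zsmul_mem (K : Type*) {R M : Type*} [Field K] [CharZero K] [Ring R]
    [Algebra K R] [AddCommGroup M] [Module R M] [Module K M] [IsScalarTower K R M]
    {L : Submodule R M} {c : ℤ} (hc : c ≠ 0) {v : M} (h : c • v ∈ L) : v ∈ L := by
  rw [← Int.cast_smul_eq_zsmul K] at h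
  exact ((L.restrictScalars K).smul_mem_iff (Int.cast_ne_zero.mpr hc)).mp h

theorem pow_mul_pow_mem_of_mul_eq_sub (K : Type*) {R : Type*} [Field K] [CharZero K] [Ring R]
    [Algebra K R] {x y z : R} {L : Submodule R R} (hyx : y * x = x * y - z) (hxz : Commute x z)
    (hyz : Commute y z) (hy : y ∈ L) {n b : ℕ} (hx : x ^ (n + b) ∈ L) : x ^ n * z ^ b ∈ L := by
  obtain ⟨u, hu⟩ := exists_pow_mul_pow_add_of_mul_eq_sub hyx hxz hyz n b
  have h := Ideal.mul_mem_left L (y ^ b) hx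
  rw [hu, L.add_mem_iff_left (Ideal.mul_mem_left L u hy)] at h
  refine Submodule.mem_of_zsmul_mem K (mul_ne_zero (pow_ne_zero _ (by norm_num)) ?_) h
  exact Nat.cast_ne_zero.mpr (Nat.descFactorial_pos.mpr (Nat.le_add_left b n)).ne'

theorem card_filter_ne_zero_eq_sum {ι : Type*} [Fintype ι] {f : ι → ℕ} (hf : ∀ j, f j ≤ 1) :
    #{j | f j ≠ 0} = ∑ j, f j := by
  rw [← sum_filter_ne_zero, card_eq_sum_ones]
  exact sum_congr rfl fun j hj => by have := (mem_filter.mp hj).2; have := hf j; omega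

theorem card_filter_ne_zero_lt_sum {ι : Type*} [Fintype ι] {f : ι → ℕ} {j₀ : ι}
    (hj₀ : 2 ≤ f j₀) : #{j | f j ≠ 0} < ∑ j, f j := by
  rw [← sum_filter_ne_zero, card_eq_sum_ones]
  exact sum_lt_sum (fun j hj => Nat.one_le_iff_ne_zero.mpr (mem_filter.mp hj).2)
    ⟨j₀, mem_filter.mpr ⟨mem_univ _, by omega⟩, by omega⟩

theorem prod_comp_eq_pow_mul_prod_ne_zero {M ι : Type*} [CommMonoid M] [Fintype ι]
    (g : ℕ → M) (f : ι → ℕ) :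
    ∏ j, g (f j) = g 0 ^ #{j | f j = 0} * ∏ j ∈ {j | f j ≠ 0}, g (f j) := by
  rw [← prod_filter_mul_prod_filter_not univ (fun j => f j = 0)]
  congr 1
  rw [prod_congr rfl fun j hj => by rw [(mem_filter.mp hj).2], prod_const]

theorem exists_sum_antidiagonalTuple_prod_eq {S : Type*} [CommSemiring S] (g : ℕ → S)
    {n a : ℕ} (ha : a ≤ n) :
    ∃ N : ℕ, 0 < N ∧ ∃ Q : S, ∑ f ∈ antidiagonalTuple n a, ∏ j, g (f j)
      = N • (g 1 ^ a * g 0 ^ (n - a)) + Q * g 0 ^ (n - a + 1) := by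
  classical
  have hcard (f : Fin n → ℕ) : #{j | f j = 0} + #{j | f j ≠ 0} = n := by
    simpa using card_filter_add_card_filter_not (s := univ) (fun j => f j = 0)
  set good := {f ∈ antidiagonalTuple n a | ∀ j, f j ≤ 1}
  have hgood : ∀ f ∈ good, ∏ j, g (f j) = g 1 ^ a * g 0 ^ (n - a) := by
    intro f hf
    obtain ⟨hfa, hf1⟩ := mem_filter.mp hf
    have hne := card_filter_ne_zero_eq_sum hf1
    rw [mem_antidiagonalTuple.mp hfa] at hne
    rw [prod_comp_eq_pow_mul_prod_ne_zero, show #{j | f j = 0} = n - a by have := hcard f; omega,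
      prod_congr rfl fun j hj => by
        rw [show f j = 1 by have := (mem_filter.mp hj).2; have := hf1 j; omega],
      prod_const, hne, mul_comm]
  have hbad : ∀ f ∈ antidiagonalTuple n a, ¬ (∀ j, f j ≤ 1) →
      g 0 ^ (n - a + 1) ∣ ∏ j, g (f j) := by
    intro f hfa hf
    obtain ⟨j₀, hj₀⟩ := not_forall.mp hf
    have hlt := card_filter_ne_zero_lt_sum (f := f) (j₀ := j₀) (by omega)
    rw [mem_antidiagonalTuple.mp hfa] at hlt
    rw [prod_comp_eq_pow_mul_prod_ne_zero]
    exact dvd_mul_of_dvd_left (pow_dvd_pow _ (by have := hcard f; omega)) _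
  obtain ⟨Q, hQ⟩ : g 0 ^ (n - a + 1) ∣ ∑ f ∈ antidiagonalTuple n a with ¬ (∀ j, f j ≤ 1),
      ∏ j, g (f j) :=
    dvd_sum fun f hf => hbad f (mem_filter.mp hf).1 (mem_filter.mp hf).2
  refine ⟨#good, ?_, Q, ?_⟩
  · obtain ⟨t, -, ht⟩ := exists_subset_card_eq (s := (univ : Finset (Fin n))) (by simpa using ha)
    refine card_pos.mpr ⟨fun j => if j ∈ t then 1 else 0, mem_filter.mpr ⟨?_, fun j => ?_⟩⟩
    · rw [mem_antidiagonalTuple, sum_boole, Nat.cast_id, filter_mem_eq_inter, univ_inter, ht]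
    · dsimp only
      split_ifs <;> omega
  · rw [← sum_filter_add_sum_filter_not _ (fun f => ∀ j, f j ≤ 1), sum_congr rfl hgood, sum_const,
      hQ, mul_comm Q]

open scoped IsMulCommutative in
theorem exists_mul_sum_antidiagonalTuple_listProd_eq {R : Type*} [Semiring R] (g : ℕ → R) (c : R)
    (hg : ∀ i j, Commute (g i) (g j)) (hc : ∀ i, Commute (g i) c) {n a : ℕ} (ha : a ≤ n) :
    ∃ N : ℕ, 0 < N ∧ ∃ Q : R, c * ∑ f ∈ antidiagonalTuple n a, (List.ofFn fun j => g (f j)).prod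
      = N • (g 1 ^ a * g 0 ^ (n - a) * c) + Q * (g 0 ^ (n - a + 1) * c) := by
  set T := Subsemiring.closure (Set.range g ∪ {c})
  have hcomm : ∀ x ∈ Set.range g ∪ {c}, ∀ y ∈ Set.range g ∪ {c}, x * y = y * x := by
    rintro _ (⟨i, rfl⟩ | rfl) _ (⟨j, rfl⟩ | rfl)
    exacts [(hg i j).eq, (hc i).eq, (hc j).eq.symm, rfl]
  have := Subsemiring.isMulCommutative_closure hcomm
  let g' : ℕ → T := fun i => ⟨g i, Subsemiring.subset_closure (Or.inl ⟨i, rfl⟩)⟩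
  let c' : T := ⟨c, Subsemiring.subset_closure (Or.inr rfl)⟩
  obtain ⟨N, hN, Q, hQ⟩ := exists_sum_antidiagonalTuple_prod_eq g' ha
  refine ⟨N, hN, Q, ?_⟩
  have hT : c' * ∑ f ∈ antidiagonalTuple n a, ∏ j, g' (f j)
      = N • (g' 1 ^ a * g' 0 ^ (n - a) * c') + Q * (g' 0 ^ (n - a + 1) * c') := by
    rw [hQ]; ring
  have h := congrArg T.subtype hT
  simp only [← List.prod_ofFn, map_mul, map_sum, map_nsmul, map_add, map_pow, map_list_prod,
    List.map_ofFn] at h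
  exact h

theorem lie_en_two (i : Fin 3) : ⁅en i, en 2⁆ = 0 := by
  fin_cases i <;> ext : 1 <;>
    simp [en, Egen, Ring.lie_def, Matrix.single_mul_single_of_ne]

theorem lie_en_one_en_zero : ⁅en 1, en 0⁆ = -en 2 := by
  ext : 1
  simp [en, Egen, Ring.lie_def, Matrix.single_mul_single_of_ne]

theorem xg_mul_xg_sub_xg_mul_xg (i j : Fin 3) (m p : ℤ) :
    xg i m * xg j p - xg j p * xg i m
      = UniversalEnvelopingAlgebra.ι ℂ ((LaurentPolynomial.T (m + p) : A) ⊗ₜ[ℂ] ⁅en i, en j⁆) := by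
  rw [LaurentPolynomial.T_add, ← LieAlgebra.ExtendScalars.bracket_tmul, ← nx, ← nx,
    LieHom.map_lie, Ring.lie_def]
  rfl

theorem commute_xg_of_lie_eq_zero {i j : Fin 3} (h : ⁅en i, en j⁆ = 0) (m p : ℤ) :
    Commute (xg i m) (xg j p) := by
  rw [commute_iff_eq, ← sub_eq_zero, xg_mul_xg_sub_xg_mul_xg, h, TensorProduct.tmul_zero, map_zero]

theorem xg_one_mul_xg_zero (m p : ℤ) : xg 1 m * xg 0 p = xg 0 p * xg 1 m - xg 2 (m + p) := by
  rw [eq_sub_iff_add_eq, ← eq_sub_iff_add_eq', ← neg_sub, xg_mul_xg_sub_xg_mul_xg,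
    lie_en_one_en_zero, TensorProduct.tmul_neg, map_neg, neg_neg]
  rfl

theorem Rtr_zero_eq_sum (k a : ℕ) :
    Rtr k 0 ((k : ℤ) + 1 + a)
      = ∑ f ∈ antidiagonalTuple (k + 1) a, (List.ofFn fun j => xg 0 (-1 - (f j : ℤ))).prod := by
  simp [Rtr]

theorem IkL0_le_Iwt (k k0 k1 k2 : ℕ) : IkL0 k ≤ Iwt k k0 k1 k2 :=
  le_sup_left.trans (le_sup_left.trans le_sup_left)

theorem Rtr_mem_Iwt (k k0 k1 k2 : ℕ) (i : Fin 2) {t : ℤ} (ht : (k : ℤ) + 1 ≤ t) :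
    Rtr k i t ∈ Iwt k k0 k1 k2 :=
  IkL0_le_Iwt k k0 k1 k2 (Submodule.mem_sup_left (Submodule.subset_span ⟨i, t, ht, rfl⟩))

theorem xg_mem_Iwt (k k0 k1 k2 : ℕ) (i : Fin 3) {m : ℤ} (hm : 0 ≤ m) :
    xg i m ∈ Iwt k k0 k1 k2 :=
  IkL0_le_Iwt k k0 k1 k2 (Submodule.mem_sup_right (Submodule.subset_span ⟨i, m, hm, rfl⟩))

theorem xg_zero_pow_mem_Iwt (k k0 k1 k2 : ℕ) : xg 0 (-1) ^ (k0 + k2 + 1) ∈ Iwt k k0 k1 k2 :=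
  Submodule.mem_sup_left (Submodule.mem_sup_left (Submodule.mem_sup_right
    (Submodule.mem_span_singleton_self _)))

theorem statement13_general (k : ℕ) (k0 k1 k2 : ℕ) (hsum : k0 + k1 + k2 = k) :
    xg 0 (-2) ^ (k0 + k2 + 1) * xg 0 (-1) ^ k1 * xg 2 (-1) ^ k2 ∈ Iwt k k2 k0 k1 := by
  set a := k0 + k2 + 1
  obtain ⟨N, hN, Q, hQ⟩ := exists_mul_sum_antidiagonalTuple_listProd_eq
    (fun i : ℕ => xg 0 (-1 - i)) (xg 2 (-1) ^ k2)
    (fun i j => commute_xg_of_lie_eq_zero (lie_self _) _ _)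
    (fun i => (commute_xg_of_lie_eq_zero (lie_en_two 0) _ _).pow_right k2)
    (n := k + 1) (a := a) (by omega)
  rw [← Rtr_zero_eq_sum, show k + 1 - a = k1 by omega] at hQ
  simp only [Nat.cast_zero, Nat.cast_one, sub_zero, show (-1 - 1 : ℤ) = -2 by norm_num] at hQ
  have hR : xg 2 (-1) ^ k2 * Rtr k 0 (k + 1 + a) ∈ Iwt k k2 k0 k1 :=
    Submodule.smul_mem _ _ (Rtr_mem_Iwt k k2 k0 k1 0 (by omega))
  have hxz : xg 0 (-1) ^ (k1 + 1) * xg 2 (-1) ^ k2 ∈ Iwt k k2 k0 k1 := by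
    refine pow_mul_pow_mem_of_mul_eq_sub ℂ (xg_one_mul_xg_zero 0 (-1))
      (commute_xg_of_lie_eq_zero (lie_en_two 0) _ _) (commute_xg_of_lie_eq_zero (lie_en_two 1) _ _)
      (xg_mem_Iwt k k2 k0 k1 1 le_rfl) ?_
    rw [show k1 + 1 + k2 = k2 + k1 + 1 by omega]
    exact xg_zero_pow_mem_Iwt k k2 k0 k1
  rw [hQ, Submodule.add_mem_iff_left _ (Ideal.mul_mem_left _ Q hxz), ← natCast_zsmul] at hR
  exact Submodule.mem_of_zsmul_mem ℂ (by omega) hR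

/-- for k₀+k₁+k₂ = k,
x_{α₁}(−2)^{k₀+k₂+1}·x_{α₁}(−1)^{k₁}·x_{α₁+α₂}(−1)^{k₂} ∈ I_{k₂Λ₀+k₀Λ₁+k₁Λ₂}. -/
theorem statement13 (k : ℕ) (hk : 0 < k) (k0 k1 k2 : ℕ) (hsum : k0 + k1 + k2 = k) :
    xg 0 (-2) ^ (k0 + k2 + 1) * xg 0 (-1) ^ k1 * xg 2 (-1) ^ k2 ∈ Iwt k k2 k0 k1 :=
  statement13_general k k0 k1 k2 hsum

end PrincipalSubspaceSL3
end
end
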